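/- If G is a minimum counterexample, then the minimum degree of G is at least 2. -/

import Mathlib

open SimpleGraph

universe u

/-- The graph obtained from a 5-cycle by blowing up each vertex into an
independent set of size 2: parts indexed by `ZMod 5`, consecutive parts
completely joined. -/
def C5Sq : SimpleGraph (ZMod 5 × Fin 2) :=
  SimpleGraph.fromRel (fun a b => a.1 = b.1 + 1)

/-- `M` is an induced matching of `G`: a set of edges of `G` such that no two
edges of `M` share an endpoint and no edge of `G` joins endpoints of two
distinct edges of `M`. -/
def IsInducedMatching {V : Type*} (G : SimpleGraph V) (M : Finset (Sym2 V)) : Prop :=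
  (M : Set (Sym2 V)) ⊆ G.edgeSet ∧
    ∀ e ∈ M, ∀ f ∈ M, e ≠ f → ∀ a ∈ e, ∀ b ∈ f, a ≠ b ∧ ¬ G.Adj a b

/-- The strong (induced) matching number of `G`. -/
noncomputable def strongMatchingNumber {V : Type*} (G : SimpleGraph V) : ℕ :=
  sSup {k | ∃ M : Finset (Sym2 V), IsInducedMatching G M ∧ M.card = k}

/-- The degree of a vertex. -/
noncomputable def deg {V : Type*} (G : SimpleGraph V) (v : V) : ℕ :=
  (G.neighborSet v).ncard

/-- The number of isolated vertices of `G`. -/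
noncomputable def numIsolated {V : Type*} (G : SimpleGraph V) : ℕ :=
  {v : V | ∀ w, ¬ G.Adj v w}.ncard

/-- The number of connected components of `G` isomorphic to `C5Sq`. -/
noncomputable def numC5SqComponents {V : Type*} (G : SimpleGraph V) : ℕ :=
  {c : G.ConnectedComponent | Nonempty (G.induce c.supp ≃g C5Sq)}.ncard

/-- `G` is a minimum counterexample: connected, maximum degree at most 4,
no isolated vertices, not isomorphic to `C5Sq`, with `9·ν_s(G) < n(G)`,
while every graph of smaller order and maximum degree at most 4 satisfies
`9·ν_s(H) ≥ n(H) − i(H) − n₅(H)`. -/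
def MinCounterexample {V : Type u} [Fintype V] (G : SimpleGraph V) : Prop :=
  G.Connected ∧ (∀ v, deg G v ≤ 4) ∧ (∀ v, ∃ w, G.Adj v w) ∧
    IsEmpty (G ≃g C5Sq) ∧
    9 * strongMatchingNumber G < Fintype.card V ∧
    ∀ (W : Type u) [Fintype W] (H : SimpleGraph W),
      Fintype.card W < Fintype.card V → (∀ w, deg H w ≤ 4) →
      (Fintype.card W : ℤ) - numIsolated H - numC5SqComponents H ≤
        9 * strongMatchingNumber H

/-!
Suppose `v` has degree one, with neighbour `u`. If `G - S` has no isolated vertices and `M` is an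
induced matching of `G` all of whose vertices have their neighbourhoods inside `S`, then
minimality applied to `G - S` (which has no `C₅²` component, as `G` is connected and `C₅²` is
4-regular) gives `9|M| < |S|`.

Let `I` be the set of vertices outside `N[u]` all of whose neighbours lie in `N[u]`. Taking
`S = N[u] ∪ I` and `M = {uv}` forces `|I| ≥ 5`. Every vertex of `I` hangs off one of the at most
three neighbours `x ≠ v` of `u`, each of which has at most three neighbours besides `u`. A case
analysis on the adjacencies among these neighbours, and on which of them have a neighbour in `I`
adjacent to none of the others, yields two or three independent neighbours `x` with private
neighbours `w_x ∈ I`. The edges `x w_x` form an induced matching, while `N[u] ∪ I`, the remaining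
neighbours of the chosen `x`, and the vertices stranded by deleting all these number at most 18,
resp. 27: a contradiction.
-/

section InducedMatching

open Finset

variable {V W : Type*} {G : SimpleGraph V}

theorem isInducedMatching_empty (G : SimpleGraph V) : IsInducedMatching G ∅ := by
  simp [IsInducedMatching]

theorem bddAbove_card_isInducedMatching [Finite V] (G : SimpleGraph V) :
    BddAbove {k | ∃ M : Finset (Sym2 V), IsInducedMatching G M ∧ M.card = k} := by
  classical
  have := Fintype.ofFinite V
  exact bddAbove_def.2 ⟨Fintype.card (Sym2 V), by rintro _ ⟨M, -, rfl⟩; exact M.card_le_univ⟩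

theorem IsInducedMatching.card_le_strongMatchingNumber [Finite V] {M : Finset (Sym2 V)}
    (hM : IsInducedMatching G M) : M.card ≤ strongMatchingNumber G :=
  le_csSup (bddAbove_card_isInducedMatching G) ⟨M, hM, rfl⟩

theorem exists_isInducedMatching_card_eq [Finite V] (G : SimpleGraph V) :
    ∃ M, IsInducedMatching G M ∧ M.card = strongMatchingNumber G :=
  Nat.sSup_mem (s := {k | ∃ M : Finset (Sym2 V), IsInducedMatching G M ∧ M.card = k})
    ⟨0, ∅, isInducedMatching_empty G, rfl⟩ (bddAbove_card_isInducedMatching G)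

theorem IsInducedMatching.exists_adj {M : Finset (Sym2 V)} (hM : IsInducedMatching G M)
    {e : Sym2 V} (he : e ∈ M) {a : V} (ha : a ∈ e) : ∃ b ∈ e, G.Adj a b := by
  have hE := hM.1 he
  induction e using Sym2.ind with
  | _ x y =>
    rcases Sym2.mem_iff.1 ha with rfl | rfl
    · exact ⟨y, Sym2.mem_mk_right _ _, hE⟩
    · exact ⟨x, Sym2.mem_mk_left _ _, hE.symm⟩

theorem IsInducedMatching.map {H : SimpleGraph W} (f : H ↪g G) {M : Finset (Sym2 W)}
    (hM : IsInducedMatching H M) : IsInducedMatching G (M.map f.toEmbedding.sym2Map) := by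
  refine ⟨?_, ?_⟩
  · simp only [coe_map, Set.image_subset_iff]
    intro e he
    induction e using Sym2.ind with
    | _ x y => simpa using hM.1 he
  · simp only [mem_map, Function.Embedding.sym2Map_apply]
    rintro _ ⟨e, he, rfl⟩ _ ⟨f, hf, rfl⟩ hef _ hfa _ hfb
    obtain ⟨a, ha, rfl⟩ := Sym2.mem_map.1 hfa
    obtain ⟨b, hb, rfl⟩ := Sym2.mem_map.1 hfb
    simpa using hM.2 e he f hf (fun h => hef (h ▸ rfl)) a ha b hb

theorem IsInducedMatching.union [DecidableEq (Sym2 V)] {M N : Finset (Sym2 V)}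
    (hM : IsInducedMatching G M) (hN : IsInducedMatching G N)
    (hsep : ∀ e ∈ M, ∀ f ∈ N, ∀ a ∈ e, ∀ b ∈ f, a ≠ b ∧ ¬ G.Adj a b) :
    IsInducedMatching G (M ∪ N) := by
  refine ⟨by simpa using And.intro hM.1 hN.1, ?_⟩
  intro e he f hf hef a ha b hb
  rcases mem_union.1 he with he | he <;> rcases mem_union.1 hf with hf | hf
  · exact hM.2 e he f hf hef a ha b hb
  · exact hsep e he f hf a ha b hb
  · exact (hsep f hf e he b hb a ha).imp Ne.symm (fun h h' => h h'.symm)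
  · exact hN.2 e he f hf hef a ha b hb

theorem exists_isInducedMatching_of_pairwise {ι : Type*} [Fintype ι] {x w : ι → V}
    (hadj : ∀ i, G.Adj (x i) (w i))
    (hsep : ∀ i j, i ≠ j → ∀ a ∈ s(x i, w i), ∀ b ∈ s(x j, w j), a ≠ b ∧ ¬ G.Adj a b) :
    ∃ M : Finset (Sym2 V), IsInducedMatching G M ∧ M.card = Fintype.card ι ∧
      ∀ e ∈ M, ∃ i, e = s(x i, w i) := by
  classical
  refine ⟨univ.image fun i => s(x i, w i), ⟨?_, ?_⟩, ?_, by simp [eq_comm]⟩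
  · simpa [Set.range_subset_iff] using hadj
  · simp only [mem_image, mem_univ, true_and]
    rintro _ ⟨i, rfl⟩ _ ⟨j, rfl⟩ hij
    exact hsep i j fun h => hij (h ▸ rfl)
  · refine card_image_of_injective _ fun i j hij => by_contra fun h => ?_
    exact (hsep i j h (x i) (Sym2.mem_mk_left _ _) (x i) (hij ▸ Sym2.mem_mk_left _ _)).1 rfl

theorem strongMatchingNumber_induce_compl_add_card_le [Finite V] {S : Set V}
    {M : Finset (Sym2 V)} (hM : IsInducedMatching G M)
    (hMS : ∀ e ∈ M, ∀ a ∈ e, G.neighborSet a ⊆ S) :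
    strongMatchingNumber (G.induce Sᶜ) + M.card ≤ strongMatchingNumber G := by
  classical
  obtain ⟨M', hM', hcard⟩ := exists_isInducedMatching_card_eq (G.induce Sᶜ)
  set f := (SimpleGraph.Embedding.induce (G := G) Sᶜ).toEmbedding.sym2Map
  have hsep : ∀ e ∈ M'.map f, ∀ e' ∈ M, ∀ a ∈ e, ∀ b ∈ e', a ≠ b ∧ ¬ G.Adj a b := by
    intro e he e' he' a ha b hb
    obtain ⟨e, -, rfl⟩ := mem_map.1 he
    obtain ⟨a, -, rfl⟩ := Sym2.mem_map.1 ha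
    obtain ⟨c, hc, hbc⟩ := hM.exists_adj he' hb
    have hbS : b ∈ S := hMS e' he' c hc hbc.symm
    have haS : (a : V) ∉ S := a.2
    show (a : V) ≠ b ∧ ¬ G.Adj a b
    exact ⟨fun h => haS (h ▸ hbS), fun h => haS (hMS e' he' b hb h.symm)⟩
  have hunion := (hM'.map (SimpleGraph.Embedding.induce Sᶜ)).union hM hsep
  have hdisj : Disjoint (M'.map f) M := by
    refine disjoint_left.2 fun e he he' => ?_
    obtain ⟨a, ha⟩ : ∃ a, a ∈ e := Sym2.ind (fun x y => ⟨x, Sym2.mem_mk_left x y⟩) e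
    exact (hsep e he e he' a ha a ha).1 rfl
  rw [← hcard, ← card_map f, ← card_union_of_disjoint hdisj]
  exact hunion.card_le_strongMatchingNumber

end InducedMatching

section InducedSubgraph

variable {V W : Type*} {G : SimpleGraph V}

theorem deg_le_deg_of_embedding [Finite V] {H : SimpleGraph W} (f : H ↪g G) (z : W) :
    deg H z ≤ deg G (f z) := by
  rw [deg, ← Set.ncard_image_of_injective _ f.injective]
  exact Set.ncard_le_ncard (by rintro _ ⟨y, hy, rfl⟩; exact f.map_adj_iff.2 hy) (Set.toFinite _)

theorem neighborSet_subset_range_of_deg_le [Finite V] {H : SimpleGraph W} (f : H ↪g G) {z : W}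
    (h : deg G (f z) ≤ deg H z) : G.neighborSet (f z) ⊆ Set.range f := by
  have hsub : f '' H.neighborSet z ⊆ G.neighborSet (f z) := by
    rintro _ ⟨y, hy, rfl⟩
    exact f.map_adj_iff.2 hy
  have heq := Set.eq_of_subset_of_ncard_le hsub
    (by rwa [Set.ncard_image_of_injective _ f.injective])
  exact heq ▸ Set.image_subset_range _ _

theorem eq_univ_of_neighborSet_subset (hG : G.Connected) {s : Set V} (hs : s.Nonempty)
    (hcl : ∀ x ∈ s, G.neighborSet x ⊆ s) : s = Set.univ := by
  obtain ⟨x, hx⟩ := hs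
  refine Set.eq_univ_of_forall fun y => ?_
  obtain ⟨p⟩ := hG.preconnected x y
  induction p with
  | nil => exact hx
  | cons h _ ih => exact ih (hcl _ hx h)

theorem deg_C5Sq (x : ZMod 5 × Fin 2) : deg C5Sq x = 4 := by
  have : C5Sq.neighborSet x = ↑(Finset.univ.filter
      (fun y : ZMod 5 × Fin 2 => x ≠ y ∧ (x.1 = y.1 + 1 ∨ y.1 = x.1 + 1))) := by
    ext y
    simp [C5Sq, SimpleGraph.fromRel_adj, SimpleGraph.neighborSet]
  have hc : ∀ z : ZMod 5 × Fin 2, (Finset.univ.filter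
      (fun y : ZMod 5 × Fin 2 => z ≠ y ∧ (z.1 = y.1 + 1 ∨ y.1 = z.1 + 1))).card = 4 := by
    decide
  rw [deg, this, Set.ncard_coe_finset, hc]

theorem numIsolated_induce_eq_zero [Finite V] {s : Set V} (hs : ∀ z ∈ s, ∃ y ∈ s, G.Adj z y) :
    numIsolated (G.induce s) = 0 := by
  rw [numIsolated, Set.ncard_eq_zero (Set.toFinite _), Set.eq_empty_iff_forall_notMem]
  rintro ⟨z, hz⟩ hiso
  obtain ⟨y, hy, hzy⟩ := hs z hz
  exact hiso ⟨y, hy⟩ hzy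

theorem numC5SqComponents_induce_eq_zero [Finite V] (hG : G.Connected)
    (hdeg : ∀ v, deg G v ≤ 4) {s : Set V} (hs : s ≠ Set.univ) :
    numC5SqComponents (G.induce s) = 0 := by
  rw [numC5SqComponents, Set.ncard_eq_zero (Set.toFinite _), Set.eq_empty_iff_forall_notMem]
  rintro c ⟨φ⟩
  let g : C5Sq ↪g G.induce s := (SimpleGraph.Embedding.induce c.supp).comp φ.symm.toEmbedding
  let f : C5Sq ↪g G := (SimpleGraph.Embedding.induce s).comp g
  have hrange : Set.range f = Set.univ := by
    refine eq_univ_of_neighborSet_subset hG (Set.range_nonempty f) ?_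
    rintro _ ⟨y, rfl⟩
    exact neighborSet_subset_range_of_deg_le f ((hdeg _).trans (deg_C5Sq y).ge)
  exact hs (Set.eq_univ_of_univ_subset (hrange ▸ Set.range_subset_iff.2 fun y => (g y).2))

end InducedSubgraph

section MinCounterexample

variable {V : Type u} [Fintype V] {G : SimpleGraph V}

theorem MinCounterexample.deg_le (hG : MinCounterexample G) (v : V) : deg G v ≤ 4 := hG.2.1 v

theorem MinCounterexample.exists_adj (hG : MinCounterexample G) (v : V) : ∃ w, G.Adj v w :=
  hG.2.2.1 v

theorem MinCounterexample.nine_mul_card_lt (hG : MinCounterexample G) {S : Set V}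
    (hS : S.Nonempty) (hsat : ∀ z ∉ S, ∃ y ∉ S, G.Adj z y) {M : Finset (Sym2 V)}
    (hM : IsInducedMatching G M)
    (hMS : ∀ e ∈ M, ∀ a ∈ e, G.neighborSet a ⊆ S) : 9 * M.card < S.ncard := by
  classical
  obtain ⟨hconn, hdeg, -, -, hlt, hmin⟩ := hG
  have hcard : Fintype.card ↥Sᶜ + S.ncard = Fintype.card V := by
    rw [← Nat.card_eq_fintype_card, Nat.card_coe_set_eq, add_comm,
      Set.ncard_add_ncard_compl, Nat.card_eq_fintype_card]
  have hSpos : 0 < S.ncard := (Set.ncard_pos (Set.toFinite _)).2 hS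
  have hSc : Sᶜ ≠ Set.univ := fun h => by simp_all
  have hind := hmin ↥Sᶜ (G.induce Sᶜ) (by omega)
    (fun w => (deg_le_deg_of_embedding (SimpleGraph.Embedding.induce Sᶜ) w).trans (hdeg _))
  rw [numIsolated_induce_eq_zero (by simpa using hsat),
    numC5SqComponents_induce_eq_zero hconn hdeg hSc] at hind
  have hunion := strongMatchingNumber_induce_compl_add_card_le hM hMS
  omega

end MinCounterexample

section Counting

variable {α β : Type*} {r s t w : Set α}

theorem ncard_biUnion_le_mul {D : Set α} (hD : D.Finite) {f : α → Set β} {k : ℕ}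
    (hf : ∀ y ∈ D, (f y).ncard ≤ k) : (⋃ y ∈ D, f y).ncard ≤ k * D.ncard := by
  have := Finset.set_ncard_biUnion_le hD.toFinset f
  simp only [Set.Finite.mem_toFinset] at this
  rw [Set.ncard_eq_toFinset_card D hD, mul_comm, ← smul_eq_mul]
  exact this.trans (Finset.sum_le_card_nsmul _ _ _ fun y hy => hf y (by simpa using hy))

theorem ncard_le_ncard_inter_add_ncard_inter (h : r ⊆ s ∪ t) :
    r.ncard ≤ (r ∩ s).ncard + (r ∩ t).ncard := by
  calc r.ncard = (r ∩ s ∪ r ∩ t).ncard := by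
        rw [← Set.inter_union_distrib_left, Set.inter_eq_left.2 h]
    _ ≤ _ := Set.ncard_union_le _ _

theorem ncard_le_ncard_inter_add_ncard_inter_add_ncard_inter (h : r ⊆ s ∪ t ∪ w) :
    r.ncard ≤ (r ∩ s).ncard + (r ∩ t).ncard + (r ∩ w).ncard := by
  calc r.ncard = (r ∩ s ∪ r ∩ t ∪ r ∩ w).ncard := by
        rw [← Set.inter_union_distrib_left, ← Set.inter_union_distrib_left, Set.inter_eq_left.2 h]
    _ ≤ _ := (Set.ncard_union_le _ _).trans (Nat.add_le_add_right (Set.ncard_union_le _ _) _)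

theorem subset_union_of_inter_subset (h : r ⊆ s ∪ t ∪ w) (hs : r ∩ s ⊆ t ∪ w) : r ⊆ t ∪ w :=
  fun _ hx => (h hx).elim (fun h' => h'.elim (fun hxs => hs ⟨hx, hxs⟩) Or.inl) Or.inr

theorem exists_subset_triple_of_ncard_le_three (hs : s.Finite) (h3 : s.ncard ≤ 3)
    (hst : s ⊆ t) {a : α} (ha : a ∈ t) : ∃ x ∈ t, ∃ y ∈ t, ∃ z ∈ t, s ⊆ {x, y, z} := by
  interval_cases hn : s.ncard
  · obtain rfl := (Set.ncard_eq_zero hs).1 hn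
    exact ⟨a, ha, a, ha, a, ha, Set.empty_subset _⟩
  · obtain ⟨x, rfl⟩ := Set.ncard_eq_one.1 hn
    have hx := hst rfl
    exact ⟨x, hx, x, hx, x, hx, by simp⟩
  · obtain ⟨x, y, -, rfl⟩ := Set.ncard_eq_two.1 hn
    exact ⟨x, hst (by simp), y, hst (by simp), y, hst (by simp), by simp⟩
  · obtain ⟨x, y, z, -, -, -, rfl⟩ := Set.ncard_eq_three.1 hn
    exact ⟨x, hst (by simp), y, hst (by simp), z, hst (by simp), subset_rfl⟩

end Counting

section Stranded

variable {V : Type*} {G : SimpleGraph V}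

def stranded (G : SimpleGraph V) (B : Set V) : Set V :=
  {z | z ∉ B ∧ G.neighborSet z ⊆ B}

theorem exists_adj_not_mem_union_stranded {C : Set V} {z : V} (hz : z ∉ C ∪ stranded G C) :
    ∃ y ∉ C ∪ stranded G C, G.Adj z y := by
  have hzC : z ∉ C := fun h => hz (Or.inl h)
  obtain ⟨y, hzy, hyC⟩ := Set.not_subset.1 fun h => hz (Or.inr ⟨hzC, h⟩)
  exact ⟨y, fun hy => hy.elim hyC fun hy => hzC (hy.2 hzy.symm), hzy⟩

theorem exists_adj_mem_diff_of_mem_stranded {B C : Set V} (hCB : C ∪ stranded G C ⊆ B) {z : V}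
    (hz : z ∈ stranded G B) : ∃ y ∈ B \ (C ∪ stranded G C), G.Adj z y := by
  obtain ⟨y, hy, hzy⟩ := exists_adj_not_mem_union_stranded fun h => hz.1 (hCB h)
  exact ⟨y, ⟨hz.2 hzy, hy⟩, hzy⟩

theorem ncard_stranded_le [Finite V] (hdeg : ∀ v, deg G v ≤ 4) {B D : Set V}
    (hD : ∀ y ∈ D, ∃ x ∈ B, G.Adj y x) (hB : ∀ z ∈ stranded G B, ∃ y ∈ D, G.Adj z y) :
    (stranded G B).ncard ≤ 3 * D.ncard := by
  have hsub : stranded G B ⊆ ⋃ y ∈ D, G.neighborSet y \ B := by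
    intro z hz
    obtain ⟨y, hy, hzy⟩ := hB z hz
    exact Set.mem_biUnion hy ⟨hzy.symm, hz.1⟩
  refine (Set.ncard_le_ncard hsub (Set.toFinite _)).trans (ncard_biUnion_le_mul (Set.toFinite _) ?_)
  intro y hy
  obtain ⟨x, hxB, hyx⟩ := hD y hy
  have hle : G.neighborSet y \ B ⊆ G.neighborSet y \ {x} :=
    Set.sdiff_subset_sdiff_right (Set.singleton_subset_iff.2 hxB)
  have := Set.ncard_sdiff_singleton_of_mem (s := G.neighborSet y) hyx
  have := hdeg y
  have := Set.ncard_le_ncard hle (Set.toFinite _)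
  rw [deg] at *
  omega

end Stranded

section Neighbourhood

variable {V : Type u} [Fintype V] {G : SimpleGraph V} {u : V}

def closedNbhd (G : SimpleGraph V) (u : V) : Set V := insert u (G.neighborSet u)

def strandedNbhd (G : SimpleGraph V) (u : V) : Set V := stranded G (closedNbhd G u)

theorem ncard_closedNbhd (u : V) : (closedNbhd G u).ncard = deg G u + 1 :=
  Set.ncard_insert_of_notMem (G.notMem_neighborSet_self) (Set.toFinite _)

theorem one_add_ncard_parts_le_deg {x : V} (hx : G.Adj u x) :
    1 + (G.neighborSet x ∩ G.neighborSet u).ncard +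
      (strandedNbhd G u ∩ G.neighborSet x).ncard +
      (G.neighborSet x \ (closedNbhd G u ∪ strandedNbhd G u)).ncard ≤ deg G x := by
  set C := closedNbhd G u
  set I := strandedNbhd G u
  have hins : (insert u (G.neighborSet x ∩ G.neighborSet u)).ncard =
      (G.neighborSet x ∩ G.neighborSet u).ncard + 1 :=
    Set.ncard_insert_of_notMem (fun h => G.irrefl h.2) (Set.toFinite _)
  have hdisj : Disjoint (insert u (G.neighborSet x ∩ G.neighborSet u)) (I ∩ G.neighborSet x) := by
    refine Set.disjoint_left.2 fun z hz hzI => hzI.1.1 ?_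
    rcases hz with rfl | hz
    exacts [Set.mem_insert _ _, Set.mem_insert_of_mem _ hz.2]
  have hsub : insert u (G.neighborSet x ∩ G.neighborSet u) ∪ (I ∩ G.neighborSet x) ⊆
      G.neighborSet x ∩ (C ∪ I) := by
    rintro z ((rfl | ⟨hzx, hzu⟩) | ⟨hzI, hzx⟩)
    · exact ⟨hx.symm, Or.inl (Set.mem_insert _ _)⟩
    · exact ⟨hzx, Or.inl (Set.mem_insert_of_mem _ hzu)⟩
    · exact ⟨hzx, Or.inr hzI⟩
  have := Set.ncard_inter_add_ncard_sdiff_eq_ncard (G.neighborSet x) (C ∪ I) (Set.toFinite _)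
  have := Set.ncard_le_ncard hsub (Set.toFinite _)
  rw [Set.ncard_union_eq hdisj (Set.toFinite _) (Set.toFinite _)] at this
  rw [deg]
  omega

theorem MinCounterexample.ncard_parts_le_three (hG : MinCounterexample G) {x : V}
    (hx : G.Adj u x) :
    (G.neighborSet x ∩ G.neighborSet u).ncard + (strandedNbhd G u ∩ G.neighborSet x).ncard +
      (G.neighborSet x \ (closedNbhd G u ∪ strandedNbhd G u)).ncard ≤ 3 := by
  have := one_add_ncard_parts_le_deg hx
  have := hG.deg_le x
  omega

/-- The deleted set is `B ∪ stranded G B` with `B = N[u] ∪ I ∪ N(X)`: a vertex stranded by deleting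
`B` is adjacent to a vertex of `N(X) \ (N[u] ∪ I)`, which has a neighbour in `X ⊆ B` and hence at
most three neighbours outside `B`. -/
theorem MinCounterexample.nine_mul_card_lt_of_subset_neighborSet (hG : MinCounterexample G)
    {X : Set V} (hX : X ⊆ G.neighborSet u) {M : Finset (Sym2 V)}
    (hM : IsInducedMatching G M)
    (hMB : ∀ e ∈ M, ∀ a ∈ e, G.neighborSet a ⊆
      closedNbhd G u ∪ strandedNbhd G u ∪ ⋃ x ∈ X, G.neighborSet x) :
    9 * M.card < deg G u + 1 + (strandedNbhd G u).ncard +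
      4 * ((⋃ x ∈ X, G.neighborSet x) \ (closedNbhd G u ∪ strandedNbhd G u)).ncard := by
  set C := closedNbhd G u
  set I := strandedNbhd G u
  set U := ⋃ x ∈ X, G.neighborSet x
  set B := C ∪ I ∪ U
  have hCB : C ∪ I ⊆ B := Set.subset_union_left
  have hXB : X ⊆ B := fun x hx => hCB (Or.inl (Or.inr (hX hx)))
  have hS := hG.nine_mul_card_lt (S := B ∪ stranded G B)
    ⟨u, Or.inl (hCB (Or.inl (Set.mem_insert u _)))⟩
    (fun z hz => exists_adj_not_mem_union_stranded hz) hM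
    (fun e he a ha => (hMB e he a ha).trans Set.subset_union_left)
  have hstr : (stranded G B).ncard ≤ 3 * (U \ (C ∪ I)).ncard := by
    refine ncard_stranded_le hG.deg_le ?_ ?_
    · rintro y ⟨hyU, -⟩
      obtain ⟨x, hx, hxy⟩ := Set.mem_iUnion₂.1 hyU
      exact ⟨x, hXB hx, G.adj_symm hxy⟩
    · intro z hz
      obtain ⟨y, ⟨hyB, hyCI⟩, hzy⟩ := exists_adj_mem_diff_of_mem_stranded hCB hz
      exact ⟨y, ⟨hyB.resolve_left hyCI, hyCI⟩, hzy⟩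
  have hB : B.ncard ≤ C.ncard + I.ncard + (U \ (C ∪ I)).ncard := by
    rw [show B = C ∪ I ∪ U \ (C ∪ I) from Set.union_sdiff_self.symm]
    exact (Set.ncard_union_le _ _).trans (by grw [Set.ncard_union_le C I])
  have := Set.ncard_union_le B (stranded G B)
  have hC : C.ncard = deg G u + 1 := ncard_closedNbhd u
  omega

theorem MinCounterexample.nine_lt_of_neighborSet_eq_singleton (hG : MinCounterexample G)
    {v : V} (hv : G.neighborSet v = {u}) :
    9 < deg G u + 1 + (strandedNbhd G u).ncard := by
  have huv : G.Adj u v := G.adj_symm (hv ▸ rfl : u ∈ G.neighborSet v)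
  have hM : IsInducedMatching G {s(u, v)} := ⟨by simpa using huv, by simp⟩
  have := hG.nine_mul_card_lt_of_subset_neighborSet (Set.empty_subset (G.neighborSet u)) hM ?_
  · simpa using this
  simp only [Finset.mem_singleton, forall_eq, Sym2.mem_iff, forall_eq_or_imp, hv]
  refine ⟨fun y hy => Or.inl (Or.inl (Or.inr hy)), ?_⟩
  simp [closedNbhd]

theorem MinCounterexample.nine_mul_card_lt_of_private {ι : Type*} [Fintype ι]
    (hG : MinCounterexample G) {x w : ι → V} (hx : ∀ i, G.Adj u (x i))
    (hind : ∀ i j, ¬ G.Adj (x i) (x j)) (hw : ∀ i, w i ∈ strandedNbhd G u)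
    (hpriv : ∀ i j, G.Adj (x i) (w j) ↔ i = j) :
    9 * Fintype.card ι < deg G u + 1 + (strandedNbhd G u).ncard +
      4 * ∑ i, (G.neighborSet (x i) \ (closedNbhd G u ∪ strandedNbhd G u)).ncard := by
  classical
  have hxC : ∀ i, x i ∈ closedNbhd G u := fun i => Set.mem_insert_of_mem _ (hx i)
  have hsep : ∀ i j, i ≠ j → ∀ a ∈ s(x i, w i), ∀ b ∈ s(x j, w j), a ≠ b ∧ ¬ G.Adj a b := by
    intro i j hij a ha b hb
    rcases Sym2.mem_iff.1 ha with rfl | rfl <;> rcases Sym2.mem_iff.1 hb with rfl | rfl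
    · exact ⟨fun h => hij ((hpriv j i).1 (h ▸ (hpriv i i).2 rfl)).symm, hind i j⟩
    · exact ⟨fun h => (hw j).1 (h ▸ hxC i), fun h => hij ((hpriv i j).1 h)⟩
    · exact ⟨fun h => (hw i).1 (h ▸ hxC j), fun h => hij ((hpriv j i).1 h.symm).symm⟩
    · exact ⟨fun h => hij ((hpriv i j).1 (h ▸ (hpriv i i).2 rfl)),
        fun h => (hw j).1 ((hw i).2 h)⟩
  obtain ⟨M, hM, hcard, hMx⟩ :=
    exists_isInducedMatching_of_pairwise (fun i => (hpriv i i).2 rfl) hsep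
  have hscheme := hG.nine_mul_card_lt_of_subset_neighborSet (X := Set.range x)
    (Set.range_subset_iff.2 hx) hM fun e he a ha => by
      obtain ⟨i, rfl⟩ := hMx e he
      rcases Sym2.mem_iff.1 ha with rfl | rfl
      · exact Set.subset_union_of_subset_right (Set.subset_biUnion_of_mem (Set.mem_range_self i)) _
      · exact fun y hy => Or.inl (Or.inl ((hw i).2 hy))
  have hsum := Set.ncard_iUnion_le_of_fintype
    fun i => G.neighborSet (x i) \ (closedNbhd G u ∪ strandedNbhd G u)
  rw [Set.biUnion_range, Set.iUnion_sdiff] at hscheme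
  omega

theorem MinCounterexample.eighteen_lt_of_pair (hG : MinCounterexample G) {a b : V}
    (ha : G.Adj u a) (hb : G.Adj u b) (hab : ¬ G.Adj a b)
    (hpa : ¬ strandedNbhd G u ∩ G.neighborSet a ⊆ G.neighborSet b)
    (hpb : ¬ strandedNbhd G u ∩ G.neighborSet b ⊆ G.neighborSet a) :
    18 < deg G u + 1 + (strandedNbhd G u).ncard +
      4 * ((G.neighborSet a \ (closedNbhd G u ∪ strandedNbhd G u)).ncard +
        (G.neighborSet b \ (closedNbhd G u ∪ strandedNbhd G u)).ncard) := by
  obtain ⟨wa, ⟨hwa, haw⟩, hbw⟩ := Set.not_subset.1 hpa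
  obtain ⟨wb, ⟨hwb, hbw'⟩, haw'⟩ := Set.not_subset.1 hpb
  have := hG.nine_mul_card_lt_of_private (u := u) (x := ![a, b]) (w := ![wa, wb])
    (by simp [Fin.forall_fin_two, ha, hb]) (by simp [Fin.forall_fin_two, hab, G.adj_comm b a])
    (by simp [Fin.forall_fin_two, hwa, hwb])
    (by simp_all [Fin.forall_fin_two])
  simpa using this

theorem MinCounterexample.twentySeven_lt_of_triple (hG : MinCounterexample G) {a b c : V}
    (ha : G.Adj u a) (hb : G.Adj u b) (hc : G.Adj u c)
    (hab : ¬ G.Adj a b) (hac : ¬ G.Adj a c) (hbc : ¬ G.Adj b c)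
    (hpa : ¬ strandedNbhd G u ∩ G.neighborSet a ⊆ G.neighborSet b ∪ G.neighborSet c)
    (hpb : ¬ strandedNbhd G u ∩ G.neighborSet b ⊆ G.neighborSet a ∪ G.neighborSet c)
    (hpc : ¬ strandedNbhd G u ∩ G.neighborSet c ⊆ G.neighborSet a ∪ G.neighborSet b) :
    27 < deg G u + 1 + (strandedNbhd G u).ncard +
      4 * ((G.neighborSet a \ (closedNbhd G u ∪ strandedNbhd G u)).ncard +
        (G.neighborSet b \ (closedNbhd G u ∪ strandedNbhd G u)).ncard +
        (G.neighborSet c \ (closedNbhd G u ∪ strandedNbhd G u)).ncard) := by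
  obtain ⟨wa, ⟨hwa, haw⟩, hwa'⟩ := Set.not_subset.1 hpa
  obtain ⟨wb, ⟨hwb, hbw⟩, hwb'⟩ := Set.not_subset.1 hpb
  obtain ⟨wc, ⟨hwc, hcw⟩, hwc'⟩ := Set.not_subset.1 hpc
  simp only [Set.mem_union, SimpleGraph.mem_neighborSet, not_or] at hwa' hwb' hwc'
  have := hG.nine_mul_card_lt_of_private (u := u) (x := ![a, b, c]) (w := ![wa, wb, wc])
    (by simp [Fin.forall_fin_succ, ha, hb, hc])
    (by simp [Fin.forall_fin_succ, hab, hac, hbc, G.adj_comm b a, G.adj_comm c a,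
      G.adj_comm c b])
    (by simp [Fin.forall_fin_succ, hwa, hwb, hwc])
    (by simp_all [Fin.forall_fin_succ])
  simpa [Fin.sum_univ_three] using this

theorem MinCounterexample.not_stranded_subset_union (hG : MinCounterexample G) {a b : V}
    (hI : 5 ≤ (strandedNbhd G u).ncard) (ha : G.Adj u a) (hb : G.Adj u b) :
    ¬ strandedNbhd G u ⊆ G.neighborSet a ∪ G.neighborSet b := by
  intro hcov
  have := hG.ncard_parts_le_three ha
  have := hG.ncard_parts_le_three hb
  have := hG.deg_le u
  have hIab := ncard_le_ncard_inter_add_ncard_inter hcov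
  have hab : ¬ G.Adj a b := fun h => by
    have : 0 < (G.neighborSet a ∩ G.neighborSet u).ncard :=
      (Set.ncard_pos (Set.toFinite _)).2 ⟨b, h, hb⟩
    have : 0 < (G.neighborSet b ∩ G.neighborSet u).ncard :=
      (Set.ncard_pos (Set.toFinite _)).2 ⟨a, h.symm, ha⟩
    omega
  have hpa : ¬ strandedNbhd G u ∩ G.neighborSet a ⊆ G.neighborSet b := fun h => by
    have := Set.ncard_le_ncard
      (Set.subset_inter subset_rfl fun w hw => (hcov hw).elim (fun h' => h ⟨hw, h'⟩) id)
      (Set.toFinite (strandedNbhd G u ∩ G.neighborSet b))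
    omega
  have hpb : ¬ strandedNbhd G u ∩ G.neighborSet b ⊆ G.neighborSet a := fun h => by
    have := Set.ncard_le_ncard
      (Set.subset_inter subset_rfl fun w hw => (hcov hw).elim id fun h' => h ⟨hw, h'⟩)
      (Set.toFinite (strandedNbhd G u ∩ G.neighborSet a))
    omega
  have := hG.eighteen_lt_of_pair ha hb hab hpa hpb
  omega

theorem MinCounterexample.false_of_adj_of_not_adj (hG : MinCounterexample G) {a b c : V}
    (hI : 5 ≤ (strandedNbhd G u).ncard) (ha : G.Adj u a) (hb : G.Adj u b) (hc : G.Adj u c)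
    (hcov : strandedNbhd G u ⊆ G.neighborSet a ∪ G.neighborSet b ∪ G.neighborSet c)
    (hab : G.Adj a b) (hac : ¬ G.Adj a c)
    (hpa : ¬ strandedNbhd G u ∩ G.neighborSet a ⊆ G.neighborSet c)
    (hpc : ¬ strandedNbhd G u ∩ G.neighborSet c ⊆ G.neighborSet a) : False := by
  have := hG.ncard_parts_le_three ha
  have := hG.ncard_parts_le_three hb
  have := hG.ncard_parts_le_three hc
  have := hG.deg_le u
  have : 0 < (G.neighborSet a ∩ G.neighborSet u).ncard :=
    (Set.ncard_pos (Set.toFinite _)).2 ⟨b, hab, hb⟩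
  have : 0 < (G.neighborSet b ∩ G.neighborSet u).ncard :=
    (Set.ncard_pos (Set.toFinite _)).2 ⟨a, hab.symm, ha⟩
  have := ncard_le_ncard_inter_add_ncard_inter_add_ncard_inter hcov
  have := hG.eighteen_lt_of_pair ha hc hac hpa hpc
  omega

theorem MinCounterexample.false_of_triangle (hG : MinCounterexample G) {a b c : V}
    (hI : 5 ≤ (strandedNbhd G u).ncard) (ha : G.Adj u a) (hb : G.Adj u b) (hc : G.Adj u c)
    (hcov : strandedNbhd G u ⊆ G.neighborSet a ∪ G.neighborSet b ∪ G.neighborSet c)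
    (hab : G.Adj a b) (hac : G.Adj a c) (hbc : G.Adj b c) : False := by
  have two_lt {x y z : V} (hxy : G.Adj x y) (hxz : G.Adj x z) (hy : G.Adj u y) (hz : G.Adj u z)
      (hyz : G.Adj y z) : 1 < (G.neighborSet x ∩ G.neighborSet u).ncard :=
    (Set.one_lt_ncard_iff (Set.toFinite _)).2 ⟨y, z, ⟨hxy, hy⟩, ⟨hxz, hz⟩, hyz.ne⟩
  have := two_lt hab hac hb hc hbc
  have := two_lt hab.symm hbc ha hc hac
  have := two_lt hac.symm hbc.symm ha hb hab
  have := hG.ncard_parts_le_three ha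
  have := hG.ncard_parts_le_three hb
  have := hG.ncard_parts_le_three hc
  have := ncard_le_ncard_inter_add_ncard_inter_add_ncard_inter hcov
  omega

theorem MinCounterexample.false_of_independent (hG : MinCounterexample G) {a b c : V}
    (hI : 5 ≤ (strandedNbhd G u).ncard) (ha : G.Adj u a) (hb : G.Adj u b) (hc : G.Adj u c)
    (hcov : strandedNbhd G u ⊆ G.neighborSet a ∪ G.neighborSet b ∪ G.neighborSet c)
    (hab : ¬ G.Adj a b) (hac : ¬ G.Adj a c) (hbc : ¬ G.Adj b c)
    (hpa : ¬ strandedNbhd G u ∩ G.neighborSet a ⊆ G.neighborSet b ∪ G.neighborSet c)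
    (hpb : ¬ strandedNbhd G u ∩ G.neighborSet b ⊆ G.neighborSet a ∪ G.neighborSet c)
    (hpc : ¬ strandedNbhd G u ∩ G.neighborSet c ⊆ G.neighborSet a ∪ G.neighborSet b) :
    False := by
  have := hG.ncard_parts_le_three ha
  have := hG.ncard_parts_le_three hb
  have := hG.ncard_parts_le_three hc
  have := hG.deg_le u
  have := ncard_le_ncard_inter_add_ncard_inter_add_ncard_inter hcov
  have := hG.twentySeven_lt_of_triple ha hb hc hab hac hbc hpa hpb hpc
  omega

theorem MinCounterexample.false_of_forall_private (hG : MinCounterexample G) {a b c : V}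
    (hI : 5 ≤ (strandedNbhd G u).ncard) (ha : G.Adj u a) (hb : G.Adj u b) (hc : G.Adj u c)
    (hcov : strandedNbhd G u ⊆ G.neighborSet a ∪ G.neighborSet b ∪ G.neighborSet c)
    (hpa : ¬ strandedNbhd G u ∩ G.neighborSet a ⊆ G.neighborSet b ∪ G.neighborSet c)
    (hpb : ¬ strandedNbhd G u ∩ G.neighborSet b ⊆ G.neighborSet a ∪ G.neighborSet c)
    (hpc : ¬ strandedNbhd G u ∩ G.neighborSet c ⊆ G.neighborSet a ∪ G.neighborSet b) :
    False := by
  have weaken {x y z : V} (h : ¬ strandedNbhd G u ∩ G.neighborSet x ⊆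
      G.neighborSet y ∪ G.neighborSet z) :
      ¬ strandedNbhd G u ∩ G.neighborSet x ⊆ G.neighborSet y ∧
        ¬ strandedNbhd G u ∩ G.neighborSet x ⊆ G.neighborSet z :=
    ⟨fun h' => h (h'.trans Set.subset_union_left), fun h' => h (h'.trans Set.subset_union_right)⟩
  have hcov' {x y z : V} (h : G.neighborSet x ∪ G.neighborSet y ∪ G.neighborSet z =
      G.neighborSet a ∪ G.neighborSet b ∪ G.neighborSet c) :
      strandedNbhd G u ⊆ G.neighborSet x ∪ G.neighborSet y ∪ G.neighborSet z := h ▸ hcov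
  -- unless `a, b, c` form a triangle or an independent set, some `x ~ y` has `x ≁ z`
  by_cases hab : G.Adj a b <;> by_cases hac : G.Adj a c <;> by_cases hbc : G.Adj b c
  · exact hG.false_of_triangle hI ha hb hc hcov hab hac hbc
  · exact hG.false_of_adj_of_not_adj hI hb ha hc (hcov' (by ac_rfl)) hab.symm hbc
      (weaken hpb).2 (weaken hpc).2
  · exact hG.false_of_adj_of_not_adj hI ha hb hc hcov hab hac (weaken hpa).2 (weaken hpc).1
  · exact hG.false_of_adj_of_not_adj hI ha hb hc hcov hab hac (weaken hpa).2 (weaken hpc).1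
  · exact hG.false_of_adj_of_not_adj hI ha hc hb (hcov' (by ac_rfl)) hac hab
      (weaken hpa).1 (weaken hpb).1
  · exact hG.false_of_adj_of_not_adj hI ha hc hb (hcov' (by ac_rfl)) hac hab
      (weaken hpa).1 (weaken hpb).1
  · exact hG.false_of_adj_of_not_adj hI hb hc ha (hcov' (by ac_rfl)) hbc (fun h => hab h.symm)
      (weaken hpb).1 (weaken hpa).1
  · exact hG.false_of_independent hI ha hb hc hcov hab hac hbc hpa hpb hpc

theorem MinCounterexample.not_stranded_subset_union_union (hG : MinCounterexample G) {a b c : V}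
    (hI : 5 ≤ (strandedNbhd G u).ncard) (ha : G.Adj u a) (hb : G.Adj u b) (hc : G.Adj u c) :
    ¬ strandedNbhd G u ⊆ G.neighborSet a ∪ G.neighborSet b ∪ G.neighborSet c := by
  intro hcov
  by_cases hpa : strandedNbhd G u ∩ G.neighborSet a ⊆ G.neighborSet b ∪ G.neighborSet c
  · exact hG.not_stranded_subset_union hI hb hc (subset_union_of_inter_subset hcov hpa)
  by_cases hpb : strandedNbhd G u ∩ G.neighborSet b ⊆ G.neighborSet a ∪ G.neighborSet c
  · exact hG.not_stranded_subset_union hI ha hc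
      (subset_union_of_inter_subset (hcov.trans (Eq.subset (by ac_rfl))) hpb)
  by_cases hpc : strandedNbhd G u ∩ G.neighborSet c ⊆ G.neighborSet a ∪ G.neighborSet b
  · exact hG.not_stranded_subset_union hI ha hb
      (subset_union_of_inter_subset (hcov.trans (Eq.subset (by ac_rfl))) hpc)
  exact hG.false_of_forall_private hI ha hb hc hcov hpa hpb hpc

theorem MinCounterexample.exists_stranded_subset_union_union (hG : MinCounterexample G) {v : V}
    (hv : G.neighborSet v = {u}) : ∃ a b c, G.Adj u a ∧ G.Adj u b ∧ G.Adj u c ∧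
      strandedNbhd G u ⊆ G.neighborSet a ∪ G.neighborSet b ∪ G.neighborSet c := by
  have hvu : G.Adj u v := G.adj_symm (hv ▸ rfl : u ∈ G.neighborSet v)
  have h3 : (G.neighborSet u \ {v}).ncard ≤ 3 := by
    have := hG.deg_le u
    rw [deg] at this
    rw [Set.ncard_sdiff_singleton_of_mem (s := G.neighborSet u) hvu]
    omega
  obtain ⟨a, ha, b, hb, c, hc, hsub⟩ :=
    exists_subset_triple_of_ncard_le_three (Set.toFinite _) h3 Set.sdiff_subset hvu
  refine ⟨a, b, c, ha, hb, hc, fun w hw => ?_⟩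
  obtain ⟨y, hwy⟩ := hG.exists_adj w
  have hy : y ∈ G.neighborSet u \ {v} := by
    rcases hw.2 hwy with rfl | hy
    · exact absurd (Set.mem_insert_of_mem _ hwy.symm) hw.1
    · refine ⟨hy, fun (hyv : y = v) => hw.1 ?_⟩
      have : w ∈ G.neighborSet v := hyv ▸ hwy.symm
      rw [hv, Set.mem_singleton_iff] at this
      exact this ▸ Set.mem_insert w _
  rcases hsub hy with rfl | rfl | rfl
  exacts [Or.inl (Or.inl hwy.symm), Or.inl (Or.inr hwy.symm), Or.inr hwy.symm]

end Neighbourhood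

/-- A minimum counterexample has minimum degree at least 2. -/
theorem stmt8 {V : Type u} [Fintype V] (G : SimpleGraph V)
    (hG : MinCounterexample G) :
    ∀ v, 2 ≤ deg G v := by
  intro v
  by_contra! hv
  obtain ⟨u, hvu⟩ : ∃ u, G.neighborSet v = {u} := by
    obtain ⟨w, hw⟩ := hG.exists_adj v
    refine Set.ncard_eq_one.1 (le_antisymm (by rw [deg] at hv; omega) ?_)
    exact (Set.ncard_pos (Set.toFinite _)).2 ⟨w, hw⟩
  have hI : 5 ≤ (strandedNbhd G u).ncard := by
    have := hG.nine_lt_of_neighborSet_eq_singleton hvu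
    have := hG.deg_le u
    omega
  obtain ⟨a, b, c, ha, hb, hc, hcov⟩ := hG.exists_stranded_subset_union_union hvu
  exact hG.not_stranded_subset_union_union hI ha hb hc hcov
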